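/- arXiv:1103.2809 — 2 statements merged into one kernel-verified Lean document; each statement's English description precedes it below -/
import Mathlib

section
/- Let ε ∈ (0,1), let m ≥ 2 be an integer, let f : {0,1}^n → {0,1} be a Boolean function, and let g(x) = c_0 + c_1 x_1 + … + c_n x_n (integer coefficients) be a linear characteristic polynomial of f over Z_m. Then there exist t ≤ ⌈(2/ε)·ln(2m)⌉ and integers k_1, …, k_t such that the function P(σ) = (1/t²)·(Σ_{i=1}^t cos(2π k_i g(σ) / m))² satisfies: P(σ) = 1 for every σ with f(σ) = 1, and P(σ) < ε for every σ with f(σ) = 0. (P(σ) is the acceptance probability of the quantum fingerprinting read-once branching program for f.) -/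
/-!
Choose the parameters `k₁, …, k_t` uniformly at random from `ZMod m`. If `g(σ) ≡ 0 (mod m)`, every
cosine equals `1`. Otherwise `r = g(σ) mod m` is a nonzero residue, and as functions of `k` the
values `cos (2π k r / m)` are bounded by `1` and have mean `0`: they are the real parts of a
nontrivial additive character. Hoeffding's inequality, from `exp (u c) ≤ cosh u + c sinh u` for
`|c| ≤ 1` and `cosh u ≤ exp (u² / 2)`, bounds the proportion of tuples with
`|∑ᵢ cos (2π kᵢ r / m)| ≥ t √ε` by `2 exp (-t ε / 2) ≤ 1 / m`. A union bound over the `m - 1`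
nonzero residues leaves a tuple that is good for all of them.
-/

/-- The value of the linear polynomial `g(x) = c₀ + c₁x₁ + … + cₙxₙ` at a Boolean input. -/
def linEval {n : ℕ} (c0 : ℤ) (c : Fin n → ℤ) (σ : Fin n → Bool) : ℤ :=
  c0 + ∑ i, c i * (if σ i then 1 else 0)

open Real Finset

section Hoeffding

variable {α : Type*} [Fintype α] {c : α → ℝ}

theorem sum_exp_mul_le_card_mul_exp (hc : ∀ a, |c a| ≤ 1) (hc0 : ∑ a, c a = 0) (u : ℝ) :
    ∑ a, exp (u * c a) ≤ Fintype.card α * exp (u ^ 2 / 2) :=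
  calc ∑ a, exp (u * c a)
      ≤ ∑ a, (cosh u + c a * sinh u) :=
        sum_le_sum fun a _ => by rw [mul_comm]; exact exp_mul_le_cosh_add_mul_sinh (hc a) u
    _ = Fintype.card α * cosh u := by
        rw [sum_add_distrib, ← sum_mul, hc0, sum_const, card_univ, nsmul_eq_mul]; ring
    _ ≤ Fintype.card α * exp (u ^ 2 / 2) := by gcongr; exact cosh_le_exp_half_sq u

theorem sum_exp_mul_sum_comp_le (hc : ∀ a, |c a| ≤ 1) (hc0 : ∑ a, c a = 0) (t : ℕ) (u : ℝ) :
    ∑ g : Fin t → α, exp (u * ∑ i, c (g i)) ≤ (Fintype.card α) ^ t * exp (t * u ^ 2 / 2) :=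
  calc ∑ g : Fin t → α, exp (u * ∑ i, c (g i))
      = (∑ a, exp (u * c a)) ^ t := by
        simp_rw [mul_sum, exp_sum]
        rw [← Fin.prod_const, prod_univ_sum, Fintype.piFinset_univ]
    _ ≤ (Fintype.card α * exp (u ^ 2 / 2)) ^ t := by
        gcongr
        exact sum_exp_mul_le_card_mul_exp hc hc0 u
    _ = (Fintype.card α) ^ t * exp (t * u ^ 2 / 2) := by
        rw [mul_pow, ← exp_nat_mul]; ring_nf

theorem card_sum_ge_le (hc : ∀ a, |c a| ≤ 1) (hc0 : ∑ a, c a = 0) {t : ℕ} {δ : ℝ}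
    (hδ : 0 ≤ δ) :
    (#{g : Fin t → α | t * δ ≤ ∑ i, c (g i)} : ℝ) ≤
      (Fintype.card α) ^ t * exp (-(t * δ ^ 2 / 2)) := by
  have markov : (#{g : Fin t → α | t * δ ≤ ∑ i, c (g i)} : ℝ) * exp (t * δ ^ 2)
      ≤ (Fintype.card α) ^ t * exp (t * δ ^ 2 / 2) :=
    calc _ = ∑ _g ∈ {g : Fin t → α | t * δ ≤ ∑ i, c (g i)}, exp (δ * (t * δ)) := by
          rw [sum_const, nsmul_eq_mul, mul_left_comm, ← sq]
      _ ≤ ∑ g ∈ {g : Fin t → α | t * δ ≤ ∑ i, c (g i)}, exp (δ * ∑ i, c (g i)) :=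
          sum_le_sum fun g hg => by gcongr; exact (mem_filter.1 hg).2
      _ ≤ ∑ g : Fin t → α, exp (δ * ∑ i, c (g i)) :=
          sum_le_sum_of_subset_of_nonneg (subset_univ _) fun g _ _ => (exp_pos _).le
      _ ≤ _ := sum_exp_mul_sum_comp_le hc hc0 t δ
  rwa [← le_div_iff₀ (exp_pos _), mul_div_assoc, ← exp_sub,
    show t * δ ^ 2 / 2 - t * δ ^ 2 = -(t * δ ^ 2 / 2) by ring] at markov

theorem card_abs_sum_ge_le (hc : ∀ a, |c a| ≤ 1) (hc0 : ∑ a, c a = 0) {t : ℕ} {δ : ℝ}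
    (hδ : 0 ≤ δ) :
    (#{g : Fin t → α | t * δ ≤ |∑ i, c (g i)|} : ℝ) ≤
      2 * (Fintype.card α) ^ t * exp (-(t * δ ^ 2 / 2)) := by
  classical
  let above (d : α → ℝ) : Finset (Fin t → α) := {g | t * δ ≤ ∑ i, d (g i)}
  have hpos : (#(above c) : ℝ) ≤ _ := card_sum_ge_le hc hc0 hδ
  have hneg : (#(above (-c)) : ℝ) ≤ _ :=
    card_sum_ge_le (c := -c) (by simpa using hc) (by simp [hc0]) hδ
  have hsub : ({g | t * δ ≤ |∑ i, c (g i)|} : Finset (Fin t → α)) ⊆ above c ∪ above (-c) := by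
    intro g
    simp only [above, mem_union, mem_filter, mem_univ, true_and, Pi.neg_apply, sum_neg_distrib]
    exact le_abs.1
  calc (#{g : Fin t → α | t * δ ≤ |∑ i, c (g i)|} : ℝ) ≤ #(above c) + #(above (-c)) := by
        exact_mod_cast (card_le_card hsub).trans (card_union_le _ _)
    _ ≤ _ := by linarith

end Hoeffding

namespace ZMod

variable {m : ℕ} [NeZero m]

theorem cos_two_pi_mul_div_eq_re_stdAddChar (a : ℤ) :
    cos (2 * π * a / m) = (stdAddChar (a : ZMod m)).re := by
  rw [stdAddChar_coe, show 2 * π * Complex.I * a / m = ((2 * π * a / m : ℝ) : ℂ) * Complex.I by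
    push_cast; ring, Complex.exp_ofReal_mul_I_re]

theorem abs_re_stdAddChar_le_one (x : ZMod m) : |(stdAddChar x).re| ≤ 1 :=
  (Complex.abs_re_le_norm _).trans (Circle.norm_coe _).le

theorem sum_re_stdAddChar_mul_eq_zero {r : ZMod m} (hr : r ≠ 0) :
    ∑ x : ZMod m, (stdAddChar (x * r)).re = 0 := by
  rw [← Complex.re_sum, AddChar.sum_mulShift r (isPrimitive_stdAddChar m), if_neg hr]
  simp

theorem exists_forall_sq_sum_re_stdAddChar_lt {ε : ℝ} (hε : 0 < ε) {t : ℕ}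
    (ht : log (2 * m) ≤ t * ε / 2) :
    ∃ g : Fin t → ZMod m, ∀ r ≠ 0, (∑ i, (stdAddChar (g i * r)).re) ^ 2 < t ^ 2 * ε := by
  set S : ZMod m → (Fin t → ZMod m) → ℝ := fun r g => ∑ i, (stdAddChar (g i * r)).re
  let bad (r : ZMod m) : Finset (Fin t → ZMod m) := {g | t * √ε ≤ |S r g|}
  have hm : (0 : ℝ) < m := by exact_mod_cast NeZero.pos m
  have hbad (r : ZMod m) (hr : r ≠ 0) : (#(bad r) : ℝ) ≤ (m : ℝ) ^ t / m :=
    calc (#(bad r) : ℝ) ≤ 2 * (m : ℝ) ^ t * exp (-(t * √ε ^ 2 / 2)) := by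
          simpa only [ZMod.card] using
            card_abs_sum_ge_le (fun x => abs_re_stdAddChar_le_one (x * r))
              (sum_re_stdAddChar_mul_eq_zero hr) (t := t) (sqrt_nonneg ε)
      _ ≤ 2 * (m : ℝ) ^ t * (2 * (m : ℝ))⁻¹ := by
          rw [sq_sqrt hε.le, exp_neg]
          gcongr
          rwa [← log_le_iff_le_exp (by positivity)]
      _ = m ^ t / m := by field_simp
  have hcard : #((univ.erase 0).biUnion bad) < #(univ : Finset (Fin t → ZMod m)) := by
    have : (#((univ.erase 0).biUnion bad) : ℝ) < (m : ℝ) ^ t :=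
      calc (#((univ.erase 0).biUnion bad) : ℝ) ≤ ∑ r ∈ univ.erase 0, (#(bad r) : ℝ) := by
            exact_mod_cast card_biUnion_le
        _ ≤ ∑ r ∈ univ.erase (0 : ZMod m), (m ^ t / m : ℝ) :=
            sum_le_sum fun r hr => hbad r (ne_of_mem_erase hr)
        _ = ((m : ℝ) - 1) * (m ^ t / m) := by
            rw [sum_const, card_erase_of_mem (mem_univ _), card_univ, ZMod.card, nsmul_eq_mul,
              Nat.cast_sub NeZero.one_le, Nat.cast_one]
        _ < m ^ t := by
            rw [sub_mul, one_mul, mul_div_cancel₀ _ hm.ne']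
            linarith [show 0 < (m : ℝ) ^ t / m by positivity]
    rw [card_univ, Fintype.card_fun, ZMod.card, Fintype.card_fin]
    exact_mod_cast this
  obtain ⟨g, -, hg⟩ := exists_mem_notMem_of_card_lt_card hcard
  refine ⟨g, fun r hr => ?_⟩
  have hS : |S r g| < t * √ε := not_le.1 fun h =>
    hg (mem_biUnion.2 ⟨r, mem_erase.2 ⟨hr, mem_univ _⟩, mem_filter.2 ⟨mem_univ _, h⟩⟩)
  calc S r g ^ 2 = |S r g| ^ 2 := (sq_abs _).symm
    _ < (t * √ε) ^ 2 := by gcongr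
    _ = t ^ 2 * ε := by rw [mul_pow, sq_sqrt hε.le]

end ZMod

/-- The acceptance probability `P(σ)` of the fingerprinting program, as a function of `x = g(σ)`. -/
noncomputable def fingerprintAcceptance {t : ℕ} (m : ℕ) (k : Fin t → ℤ) (x : ℤ) : ℝ :=
  1 / (t : ℝ) ^ 2 * (∑ i, cos (2 * π * (k i : ℝ) * (x : ℝ) / (m : ℝ))) ^ 2

section Fingerprint

variable {m : ℕ} [NeZero m] {t : ℕ}

open ZMod

theorem fingerprintAcceptance_val_eq (g : Fin t → ZMod m) (x : ℤ) :
    fingerprintAcceptance m (fun i => ((g i).val : ℤ)) x =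
      1 / (t : ℝ) ^ 2 * (∑ i, (stdAddChar (g i * (x : ZMod m))).re) ^ 2 := by
  unfold fingerprintAcceptance
  congr 3 with i
  rw [mul_assoc (2 * π), ← Int.cast_mul, cos_two_pi_mul_div_eq_re_stdAddChar]
  push_cast [natCast_zmod_val]
  rfl

theorem fingerprintAcceptance_val_of_dvd (ht : t ≠ 0) (g : Fin t → ZMod m) {x : ℤ}
    (hx : (m : ℤ) ∣ x) : fingerprintAcceptance m (fun i => ((g i).val : ℤ)) x = 1 := by
  rw [fingerprintAcceptance_val_eq, (intCast_zmod_eq_zero_iff_dvd x m).2 hx]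
  simp [ht]

theorem exists_fingerprintAcceptance {ε : ℝ} (hε : 0 < ε) (ht : log (2 * m) ≤ t * ε / 2) :
    ∃ k : Fin t → ℤ, ∀ x : ℤ, ((m : ℤ) ∣ x → fingerprintAcceptance m k x = 1) ∧
      (¬ (m : ℤ) ∣ x → fingerprintAcceptance m k x < ε) := by
  have ht0 : t ≠ 0 := by
    rintro rfl
    have : (1 : ℝ) < 2 * m := by norm_cast; linarith [NeZero.one_le (n := m)]
    linarith [log_pos this]
  obtain ⟨g, hg⟩ := exists_forall_sq_sum_re_stdAddChar_lt hε ht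
  refine ⟨_, fun x => ⟨fingerprintAcceptance_val_of_dvd ht0 g, fun hx => ?_⟩⟩
  have hS := hg x ((intCast_zmod_eq_zero_iff_dvd x m).not.2 hx)
  rw [fingerprintAcceptance_val_eq]
  calc 1 / (t : ℝ) ^ 2 * (∑ i, (stdAddChar (g i * (x : ZMod m))).re) ^ 2
      < 1 / (t : ℝ) ^ 2 * (t ^ 2 * ε) := by gcongr
    _ = ε := by field_simp

end Fingerprint

theorem linear_polynomial_fingerprinting_general (n : ℕ) (ε : ℝ) (hε0 : 0 < ε)
    (m : ℕ) (hm : 2 ≤ m) (f : (Fin n → Bool) → Bool) (c0 : ℤ) (c : Fin n → ℤ)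
    (hchar : ∀ σ : Fin n → Bool, ((m : ℤ) ∣ linEval c0 c σ) ↔ f σ = true) :
    ∃ t : ℕ, 0 < t ∧ t ≤ ⌈(2 / ε) * Real.log (2 * (m : ℝ))⌉₊ ∧
      ∃ k : Fin t → ℤ,
        ∀ σ : Fin n → Bool,
          (f σ = true →
            (1 / (t : ℝ) ^ 2) *
              (∑ i, Real.cos (2 * Real.pi * (k i : ℝ) * ((linEval c0 c σ : ℤ) : ℝ) / (m : ℝ))) ^ 2
              = 1) ∧
          (f σ = false →
            (1 / (t : ℝ) ^ 2) *
              (∑ i, Real.cos (2 * Real.pi * (k i : ℝ) * ((linEval c0 c σ : ℤ) : ℝ) / (m : ℝ))) ^ 2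
              < ε) := by
  have : NeZero m := ⟨by omega⟩
  have hlog : 0 < log (2 * m) := log_pos (by norm_cast; omega)
  set t := ⌈(2 / ε) * log (2 * (m : ℝ))⌉₊
  have ht : log (2 * m) ≤ t * ε / 2 :=
    calc log (2 * m) = (2 / ε) * log (2 * (m : ℝ)) * ε / 2 := by field_simp
      _ ≤ t * ε / 2 := by gcongr; exact Nat.le_ceil _
  obtain ⟨k, hk⟩ := exists_fingerprintAcceptance hε0 ht
  refine ⟨t, Nat.ceil_pos.2 (by positivity), le_rfl, k, fun σ => ⟨fun hf => ?_, fun hf => ?_⟩⟩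
  · exact (hk _).1 ((hchar σ).2 hf)
  · exact (hk _).2 fun h => by simp [(hchar σ).1 h] at hf

/-- If a Boolean function `f` has a linear characteristic polynomial
`g = c₀ + c₁x₁ + … + cₙxₙ` over `ℤ_m`, then the quantum fingerprinting program
accepts every `σ ∈ f⁻¹(1)` with probability `1` and every `σ ∈ f⁻¹(0)` with
probability `< ε`, using `t ≤ ⌈(2/ε)·ln(2m)⌉` parameters `k_1, …, k_t`. -/
theorem linear_polynomial_fingerprinting (n : ℕ) (ε : ℝ) (hε0 : 0 < ε) (hε1 : ε < 1)
    (m : ℕ) (hm : 2 ≤ m) (f : (Fin n → Bool) → Bool) (c0 : ℤ) (c : Fin n → ℤ)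
    (hchar : ∀ σ : Fin n → Bool, ((m : ℤ) ∣ linEval c0 c σ) ↔ f σ = true) :
    ∃ t : ℕ, 0 < t ∧ t ≤ ⌈(2 / ε) * Real.log (2 * (m : ℝ))⌉₊ ∧
      ∃ k : Fin t → ℤ,
        ∀ σ : Fin n → Bool,
          (f σ = true →
            (1 / (t : ℝ) ^ 2) *
              (∑ i, Real.cos (2 * Real.pi * (k i : ℝ) * ((linEval c0 c σ : ℤ) : ℝ) / (m : ℝ))) ^ 2
              = 1) ∧
          (f σ = false →
            (1 / (t : ℝ) ^ 2) *
              (∑ i, Real.cos (2 * Real.pi * (k i : ℝ) * ((linEval c0 c σ : ℤ) : ℝ) / (m : ℝ))) ^ 2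
              < ε) :=
  linear_polynomial_fingerprinting_general n ε hε0 m hm f c0 c hchar
end

section
/- Let f = f_1 ∨ f_2 ∨ … ∨ f_s be a disjunction of Boolean functions f_1, …, f_s : {0,1}^n → {0,1}, where the negation of each f_j has a linear characteristic polynomial g_j over Z_m (m ≥ 2). Then {g_1, …, g_s} is a linear characteristic of ¬f = ¬f_1 ∧ … ∧ ¬f_s over Z_m, and consequently for every ε ∈ (0,1) there exist t ≤ ⌈(2/ε)·ln(2m)⌉ and integers k_1, …, k_t such that P(σ) = (1/t)·Σ_{i=1}^t Π_{j=1}^s cos²(π k_i g_j(σ) / m) equals 1 for every σ with f(σ) = 0 and is at most 1/2 + √ε/2 for every σ with f(σ) = 1. -/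
open Real Finset

lemma sum_range_cos_two_pi_mul_div_eq_zero {m : ℕ} {a : ℤ} (h : ¬ (m : ℤ) ∣ a) :
    ∑ k ∈ range m, cos (2 * π * k * a / m) = 0 := by
  rcases eq_or_ne m 0 with rfl | hm
  · simp
  set z : ℂ := Complex.exp (2 * π * a / m * Complex.I)
  have hz_pow (k : ℕ) : z ^ k = Complex.exp ((2 * π * k * a / m : ℝ) * Complex.I) := by
    rw [← Complex.exp_nat_mul]; push_cast; ring_nf
  have hz_ne_one : z ≠ 1 := by
    rw [Ne, Complex.exp_eq_one_iff]
    rintro ⟨q, hq⟩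
    have hdiv : (a / m : ℂ) = q := mul_right_cancel₀ Complex.two_pi_I_ne_zero (by rw [← hq]; ring)
    field_simp at hdiv
    exact h ⟨q, by exact_mod_cast hdiv⟩
  have hz_pow_m : z ^ m = 1 := by
    rw [hz_pow, Complex.exp_eq_one_iff]
    exact ⟨a, by push_cast; field_simp⟩
  have hgeom : ∑ k ∈ range m, z ^ k = 0 := by
    rw [geom_sum_eq hz_ne_one, hz_pow_m, sub_self, zero_div]
  have := congrArg Complex.re hgeom
  rw [Complex.re_sum] at this
  simpa only [hz_pow, Complex.exp_ofReal_mul_I_re, Complex.zero_re] using this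

lemma cos_two_pi_mul_div_emod (m : ℕ) (k a : ℤ) :
    cos (2 * π * k * a / m) = cos (2 * π * k * (a % m : ℤ) / m) := by
  rcases eq_or_ne m 0 with rfl | hm
  · simp
  have hsplit : (a : ℝ) = (a % m : ℤ) + m * (a / m : ℤ) := by
    exact_mod_cast (Int.emod_add_mul_ediv a m).symm
  have harg : 2 * π * k * a / m = 2 * π * k * (a % m : ℤ) / m + (k * (a / m) : ℤ) * (2 * π) := by
    rw [hsplit]; push_cast; field_simp
  rw [harg, cos_add_int_mul_two_pi]

lemma cos_pi_mul_div_sq_eq_one_of_dvd {m : ℕ} {a : ℤ} (h : (m : ℤ) ∣ a) (k : ℤ) :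
    cos (π * k * a / m) ^ 2 = 1 := by
  obtain ⟨q, rfl⟩ := h
  rcases eq_or_ne m 0 with rfl | hm
  · simp
  have harg : π * k * (m * q : ℤ) / m = (k * q : ℤ) * π := by push_cast; field_simp
  rw [harg, ← sq_abs, abs_cos_int_mul_pi, one_pow]

lemma exists_forall_notMem_of_sum_card_lt {ι α : Type*} [Fintype α] [DecidableEq α]
    {R : Finset ι} {B : ι → Finset α} (h : ∑ r ∈ R, #(B r) < Fintype.card α) :
    ∃ v, ∀ r ∈ R, v ∉ B r := by
  by_contra! hcover
  have hsub : (univ : Finset α) ⊆ R.biUnion B := fun v _ => mem_biUnion.2 (hcover v)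
  have := (card_le_card hsub).trans card_biUnion_le
  rw [card_univ] at this
  omega

lemma card_filter_lt_sum_le_exp_mul_pow {α : Type*} [Fintype α] (t : ℕ) (Y : α → ℝ)
    (a : ℝ) {L : ℝ} (hL : 0 ≤ L) :
    (#{v : Fin t → α | a < ∑ i, Y (v i)} : ℝ) ≤ exp (-(L * a)) * (∑ k, exp (L * Y k)) ^ t := by
  have hmarkov (v : Fin t → α) :
      (if a < ∑ i, Y (v i) then 1 else 0 : ℝ) ≤ exp (-(L * a)) * ∏ i, exp (L * Y (v i)) := by
    rw [← exp_sum, ← exp_add, ← mul_sum]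
    split_ifs with h
    · exact one_le_exp (by nlinarith)
    · positivity
  calc (#{v : Fin t → α | a < ∑ i, Y (v i)} : ℝ)
      = ∑ v : Fin t → α, (if a < ∑ i, Y (v i) then 1 else 0 : ℝ) := by
        rw [card_filter, Nat.cast_sum]; push_cast; rfl
    _ ≤ ∑ v : Fin t → α, exp (-(L * a)) * ∏ i, exp (L * Y (v i)) := sum_le_sum fun v _ => hmarkov v
    _ = exp (-(L * a)) * (∑ k, exp (L * Y k)) ^ t := by
        rw [← mul_sum, sum_pow', Fintype.piFinset_univ]

lemma card_filter_mul_lt_sum_le_exp {α : Type*} [Fintype α] (t : ℕ) {Y : α → ℝ}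
    (hY : ∀ k, |Y k| ≤ 1) (hY_sum : ∑ k, Y k = 0) {δ : ℝ} (hδ : 0 ≤ δ) :
    (#{v : Fin t → α | t * δ < ∑ i, Y (v i)} : ℝ) ≤ Fintype.card α ^ t * exp (-(t * δ ^ 2 / 2)) := by
  have hmgf : ∑ k, exp (δ * Y k) ≤ Fintype.card α * exp (δ ^ 2 / 2) := calc
    ∑ k, exp (δ * Y k) ≤ ∑ k, (cosh δ + Y k * sinh δ) :=
      sum_le_sum fun k _ => mul_comm δ (Y k) ▸ exp_mul_le_cosh_add_mul_sinh (hY k) δ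
    _ = Fintype.card α * cosh δ := by simp [sum_add_distrib, ← sum_mul, hY_sum]
    _ ≤ Fintype.card α * exp (δ ^ 2 / 2) := by gcongr; exact cosh_le_exp_half_sq δ
  calc (#{v : Fin t → α | t * δ < ∑ i, Y (v i)} : ℝ)
      ≤ exp (-(δ * (t * δ))) * (∑ k, exp (δ * Y k)) ^ t :=
        card_filter_lt_sum_le_exp_mul_pow t Y _ hδ
    _ ≤ exp (-(δ * (t * δ))) * (Fintype.card α * exp (δ ^ 2 / 2)) ^ t := by
        gcongr
    _ = Fintype.card α ^ t * exp (-(t * δ ^ 2 / 2)) := by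
        rw [mul_pow, ← exp_nat_mul, mul_left_comm, ← exp_add]
        ring_nf

theorem exists_sum_cos_two_pi_mul_div_le {m t : ℕ} (hm : 0 < m) {δ : ℝ} (hδ : 0 ≤ δ)
    (ht : log (2 * m) ≤ t * δ ^ 2 / 2) :
    ∃ k : Fin t → ℤ, ∀ a : ℤ, ¬ (m : ℤ) ∣ a → ∑ i, cos (2 * π * k i * a / m) ≤ t * δ := by
  let Y (r : ℤ) (k : Fin m) : ℝ := cos (2 * π * (k : ℕ) * r / m)
  let bad (r : ℤ) : Finset (Fin t → Fin m) := {v | t * δ < ∑ i, Y r (v i)}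
  have hmR : (0 : ℝ) < m := by exact_mod_cast hm
  have hexp : exp (-(t * δ ^ 2 / 2)) ≤ 1 / (2 * m) := by
    rw [one_div, ← exp_log (by positivity : (0 : ℝ) < 2 * m), ← exp_neg]
    exact exp_le_exp.2 (neg_le_neg ht)
  have hbad (r : ℤ) (hr : r ∈ Ioo 0 (m : ℤ)) : (#(bad r) : ℝ) ≤ m ^ t / (2 * m) := by
    rw [mem_Ioo] at hr
    have hr_ndvd : ¬ (m : ℤ) ∣ r := fun h => (Int.le_of_dvd hr.1 h).not_gt hr.2
    have hY_sum : ∑ k, Y r k = 0 := by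
      rw [Fin.sum_univ_eq_sum_range (fun k => cos (2 * π * k * r / m))]
      exact sum_range_cos_two_pi_mul_div_eq_zero hr_ndvd
    calc (#(bad r) : ℝ) ≤ Fintype.card (Fin m) ^ t * exp (-(t * δ ^ 2 / 2)) :=
          card_filter_mul_lt_sum_le_exp t (fun k => abs_cos_le_one _) hY_sum hδ
      _ ≤ m ^ t * (1 / (2 * m)) := by rw [Fintype.card_fin]; gcongr
      _ = m ^ t / (2 * m) := by ring
  have hcount : ∑ r ∈ Ioo 0 (m : ℤ), #(bad r) < Fintype.card (Fin t → Fin m) := by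
    have hIoo : (#(Ioo 0 (m : ℤ)) : ℝ) ≤ m := by
      rw [Int.card_Ioo]; exact_mod_cast (by omega : (m - 0 - 1 : ℤ).toNat ≤ m)
    have : (∑ r ∈ Ioo 0 (m : ℤ), #(bad r) : ℝ) < m ^ t := calc
      (∑ r ∈ Ioo 0 (m : ℤ), #(bad r) : ℝ) ≤ #(Ioo 0 (m : ℤ)) * (m ^ t / (2 * m)) := by
          rw [← nsmul_eq_mul]; exact sum_le_card_nsmul _ _ _ hbad
      _ ≤ m * (m ^ t / (2 * m)) := by gcongr
      _ < m ^ t := by field_simp; nlinarith [pow_pos hmR t]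
    rw [Fintype.card_fun, Fintype.card_fin, Fintype.card_fin]
    exact_mod_cast this
  obtain ⟨v, hv⟩ := exists_forall_notMem_of_sum_card_lt hcount
  refine ⟨fun i => (v i : ℕ), fun a ha => ?_⟩
  have hr : a % m ∈ Ioo 0 (m : ℤ) := mem_Ioo.2
    ⟨(Int.emod_nonneg a (by omega)).lt_of_ne' (mt Int.dvd_of_emod_eq_zero ha),
      Int.emod_lt_of_pos a (by omega)⟩
  have := hv _ hr
  simp only [bad, mem_filter, mem_univ, true_and, not_lt] at this
  simp only [cos_two_pi_mul_div_emod m _ a]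
  simpa [Y] using this

theorem exists_mean_cos_sq_pi_mul_div_le {m t : ℕ} (hm : 0 < m) (ht0 : 0 < t) {δ : ℝ}
    (hδ : 0 ≤ δ) (ht : log (2 * m) ≤ t * δ ^ 2 / 2) :
    ∃ k : Fin t → ℤ, ∀ a : ℤ, ¬ (m : ℤ) ∣ a →
      1 / (t : ℝ) * ∑ i, cos (π * k i * a / m) ^ 2 ≤ 1 / 2 + δ / 2 := by
  obtain ⟨k, hk⟩ := exists_sum_cos_two_pi_mul_div_le hm hδ ht
  refine ⟨k, fun a ha => ?_⟩
  have hsq (i : Fin t) : cos (π * k i * a / m) ^ 2 = 1 / 2 + cos (2 * π * k i * a / m) / 2 := by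
    rw [cos_sq]; ring_nf
  have htR : (0 : ℝ) < t := by exact_mod_cast ht0
  have hmean : ∑ i, cos (π * k i * a / m) ^ 2 = t / 2 + (∑ i, cos (2 * π * k i * a / m)) / 2 := by
    rw [sum_congr rfl fun i _ => hsq i, sum_add_distrib, sum_div, sum_const, card_univ,
      Fintype.card_fin, nsmul_eq_mul]
    ring
  rw [hmean]
  field_simp
  linarith [hk a ha]

/-- If `f = f₁ ∨ … ∨ f_s` where the negation of each `f_j` has a linear characteristic
polynomial `g_j` over `ℤ_m`, then `{g₁,…,g_s}` is a linear characteristic of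
`¬f = ¬f₁ ∧ … ∧ ¬f_s` over `ℤ_m`, and for every `ε ∈ (0,1)` the generalized
fingerprinting program with `t ≤ ⌈(2/ε)·ln(2m)⌉` parameters accepts `f⁻¹(0)` with
probability `1` and `f⁻¹(1)` with probability at most `1/2 + √ε/2`. -/
theorem disjunction_fingerprinting (n s : ℕ) (m : ℕ) (hm : 2 ≤ m)
    (f : Fin s → (Fin n → Bool) → Bool) (c0 : Fin s → ℤ) (c : Fin s → Fin n → ℤ)
    (hchar : ∀ (j : Fin s) (σ : Fin n → Bool),
      ((m : ℤ) ∣ linEval (c0 j) (c j) σ) ↔ f j σ = false) :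
    (∀ σ : Fin n → Bool,
      (¬ ∃ j : Fin s, f j σ = true) ↔ ∀ j : Fin s, (m : ℤ) ∣ linEval (c0 j) (c j) σ) ∧
    (∀ ε : ℝ, 0 < ε → ε < 1 →
      ∃ t : ℕ, 0 < t ∧ t ≤ ⌈(2 / ε) * Real.log (2 * (m : ℝ))⌉₊ ∧
        ∃ k : Fin t → ℤ,
          ∀ σ : Fin n → Bool,
            ((¬ ∃ j : Fin s, f j σ = true) →
              (1 / (t : ℝ)) *
                ∑ i, ∏ j, (Real.cos (Real.pi * (k i : ℝ) *
                  ((linEval (c0 j) (c j) σ : ℤ) : ℝ) / (m : ℝ))) ^ 2 = 1) ∧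
            ((∃ j : Fin s, f j σ = true) →
              (1 / (t : ℝ)) *
                ∑ i, ∏ j, (Real.cos (Real.pi * (k i : ℝ) *
                  ((linEval (c0 j) (c j) σ : ℤ) : ℝ) / (m : ℝ))) ^ 2
                ≤ 1 / 2 + Real.sqrt ε / 2)) := by
  refine ⟨fun σ => by simp only [not_exists, Bool.not_eq_true, hchar], fun ε hε _ => ?_⟩
  set t := ⌈(2 / ε) * log (2 * (m : ℝ))⌉₊
  have hlog : 0 < log (2 * (m : ℝ)) := log_pos (by norm_cast; omega)
  have ht0 : 0 < t := Nat.ceil_pos.2 (by positivity)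
  have ht : log (2 * m) ≤ t * √ε ^ 2 / 2 := by
    have hceil : (2 / ε) * log (2 * (m : ℝ)) ≤ t := Nat.le_ceil _
    rw [sq_sqrt hε.le]
    rw [div_mul_eq_mul_div, div_le_iff₀ hε] at hceil
    linarith
  obtain ⟨k, hk⟩ := exists_mean_cos_sq_pi_mul_div_le (by omega) ht0 (sqrt_nonneg ε) ht
  refine ⟨t, ht0, le_rfl, k, fun σ => ⟨fun hacc => ?_, fun ⟨j, hj⟩ => ?_⟩⟩
  · have hdvd (j : Fin s) : (m : ℤ) ∣ linEval (c0 j) (c j) σ := by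
      simpa [hchar] using not_exists.1 hacc j
    simp [cos_pi_mul_div_sq_eq_one_of_dvd (hdvd _), ht0.ne']
  · have hndvd : ¬ (m : ℤ) ∣ linEval (c0 j) (c j) σ := by simp [hchar, hj]
    refine le_trans ?_ (hk _ hndvd)
    gcongr with i
    simpa using prod_le_prod_of_subset_of_le_one (singleton_subset_iff.2 (mem_univ j))
      (fun _ _ => sq_nonneg _) (fun _ _ _ => cos_sq_le_one _)
end
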